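/- arXiv:2604.20160 — 3 statements merged into one kernel-verified Lean document; each statement's English description precedes it below -/
import Mathlib

section
/- Let n ≥ 1 and let γ : ℝ → ℝⁿ be a curve, s₋ ≤ s₊ real numbers, and v₋, v₊ ∈ ℝⁿ unit vectors such that γ(s) = γ(s₊) + (s − s₊)·v₊ for all s ≥ s₊ and γ(s) = γ(s₋) + (s − s₋)·v₋ for all s ≤ s₋. Then for every real C ≥ 0, the total sojourn time of γ relative to C exists: the function (s, s') ↦ s − s' − √(C + ‖γ(s)‖²) − √(C + ‖γ(s')‖²) tends, along the product filter atTop ×ˢ atBot, to the limit (s₊ − s₋) − ⟪γ(s₊), v₊⟫ + ⟪γ(s₋), v₋⟫. -/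
open Filter
open scoped RealInnerProductSpace

private lemma sqrt_sq_add_sub_tendsto (K : ℝ) (hK : 0 ≤ K) :
    Tendsto (fun x : ℝ => x - Real.sqrt (x ^ 2 + K)) atTop (nhds 0) := by
  have h0 : Tendsto (fun x : ℝ => Real.sqrt (x ^ 2 + K) - x) atTop (nhds 0) := by
    have hub : Tendsto (fun x : ℝ => K / (2 * x)) atTop (nhds 0) :=
      Tendsto.div_atTop tendsto_const_nhds (tendsto_id.const_mul_atTop two_pos)
    apply tendsto_of_tendsto_of_tendsto_of_le_of_le' tendsto_const_nhds hub
    · filter_upwards [eventually_ge_atTop (1 : ℝ)] with x hx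
      have hx0 : (0 : ℝ) ≤ x := by linarith
      have : x ≤ Real.sqrt (x ^ 2 + K) := by
        calc x = Real.sqrt (x ^ 2) := by rw [Real.sqrt_sq hx0]
        _ ≤ _ := Real.sqrt_le_sqrt (by linarith)
      linarith
    · filter_upwards [eventually_ge_atTop (1 : ℝ)] with x hx
      have hx0 : (0 : ℝ) < x := by linarith
      have hq : x ^ 2 + K ≤ (x + K / (2 * x)) ^ 2 := by
        have h1 : (2 * x) * (K / (2 * x)) = K := by field_simp
        nlinarith [sq_nonneg (K / (2 * x))]
      have hnn : 0 ≤ x + K / (2 * x) := by positivity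
      have : Real.sqrt (x ^ 2 + K) ≤ x + K / (2 * x) := by
        calc Real.sqrt (x ^ 2 + K) ≤ Real.sqrt ((x + K / (2 * x)) ^ 2) :=
          Real.sqrt_le_sqrt hq
        _ = x + K / (2 * x) := Real.sqrt_sq hnn
      linarith
  have := h0.neg
  simp only [neg_sub, neg_zero] at this
  exact this

/-- For a curve `γ : ℝ → ℝⁿ` that is a straight unit-speed line with direction `vPlus` for
parameters `s ≥ sPlus` and with direction `vMinus` for parameters `s ≤ sMinus`, the total
sojourn time relative to a constant `C ≥ 0` exists: the function
`(s, s') ↦ s − s' − √(C + ‖γ(s)‖²) − √(C + ‖γ(s')‖²)` tends, along `atTop ×ˢ atBot`, to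
`(sPlus − sMinus) − ⟪γ(sPlus), vPlus⟫ + ⟪γ(sMinus), vMinus⟫`. -/
theorem totalSojournTime_exists {n : ℕ} (hn : 1 ≤ n)
    (γ : ℝ → EuclideanSpace ℝ (Fin n)) (sMinus sPlus : ℝ) (hs : sMinus ≤ sPlus)
    (vMinus vPlus : EuclideanSpace ℝ (Fin n)) (hvm : ‖vMinus‖ = 1) (hvp : ‖vPlus‖ = 1)
    (hout : ∀ s, sPlus ≤ s → γ s = γ sPlus + (s - sPlus) • vPlus)
    (hin : ∀ s, s ≤ sMinus → γ s = γ sMinus + (s - sMinus) • vMinus)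
    (C : ℝ) (hC : 0 ≤ C) :
    Tendsto
      (fun p : ℝ × ℝ =>
        p.1 - p.2 - Real.sqrt (C + ‖γ p.1‖ ^ 2) - Real.sqrt (C + ‖γ p.2‖ ^ 2))
      (atTop ×ˢ atBot)
      (nhds ((sPlus - sMinus) - ⟪γ sPlus, vPlus⟫ + ⟪γ sMinus, vMinus⟫)) := by
  set a := γ sPlus with ha
  set b := γ sMinus with hb
  set tp := ⟪a, vPlus⟫ with htp
  set tm := ⟪b, vMinus⟫ with htm
  -- Cauchy–Schwarz gives nonnegativity of the "impact parameter" constants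
  have hcsP : tp ^ 2 ≤ ‖a‖ ^ 2 := by
    have h := abs_real_inner_le_norm a vPlus
    rw [hvp, mul_one] at h
    nlinarith [abs_nonneg tp, sq_abs tp]
  have hcsM : tm ^ 2 ≤ ‖b‖ ^ 2 := by
    have h := abs_real_inner_le_norm b vMinus
    rw [hvm, mul_one] at h
    nlinarith [abs_nonneg tm, sq_abs tm]
  have hKp : 0 ≤ C + ‖a‖ ^ 2 - tp ^ 2 := by linarith
  have hKm : 0 ≤ C + ‖b‖ ^ 2 - tm ^ 2 := by linarith
  -- expansion of the norm on the outgoing ray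
  have keyP : ∀ s, sPlus ≤ s →
      C + ‖γ s‖ ^ 2 = (s - sPlus + tp) ^ 2 + (C + ‖a‖ ^ 2 - tp ^ 2) := by
    intro s hs'
    rw [hout s hs', norm_add_sq_real, real_inner_smul_right, norm_smul,
      hvp, ← htp]
    simp only [mul_one, Real.norm_eq_abs, mul_pow, sq_abs]
    ring
  have keyM : ∀ s, s ≤ sMinus →
      C + ‖γ s‖ ^ 2 = (sMinus - tm - s) ^ 2 + (C + ‖b‖ ^ 2 - tm ^ 2) := by
    intro s hs'
    rw [hin s hs', norm_add_sq_real, real_inner_smul_right, norm_smul,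
      hvm, ← htm]
    simp only [mul_one, Real.norm_eq_abs, mul_pow, sq_abs]
    ring
  have hf : Tendsto (fun s : ℝ => s - Real.sqrt (C + ‖γ s‖ ^ 2)) atTop
      (nhds (sPlus - tp)) := by
    have hx : Tendsto (fun s : ℝ => s - sPlus + tp) atTop atTop :=
      tendsto_atTop_add_const_right _ _ (tendsto_atTop_add_const_right _ _ tendsto_id)
    have h1 : Tendsto (fun s : ℝ =>
        ((s - sPlus + tp) - Real.sqrt ((s - sPlus + tp) ^ 2 + (C + ‖a‖ ^ 2 - tp ^ 2)))
          + (sPlus - tp)) atTop (nhds (0 + (sPlus - tp))) :=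
      Tendsto.add_const _ ((sqrt_sq_add_sub_tendsto _ hKp).comp hx)
    rw [zero_add] at h1
    apply h1.congr'
    filter_upwards [eventually_ge_atTop sPlus] with s hs'
    rw [keyP s hs']
    ring
  have hg : Tendsto (fun s : ℝ => -s - Real.sqrt (C + ‖γ s‖ ^ 2)) atBot
      (nhds (-sMinus + tm)) := by
    have hx : Tendsto (fun s : ℝ => sMinus - tm - s) atBot atTop := by
      have : Tendsto (fun s : ℝ => -s) atBot atTop := tendsto_neg_atBot_atTop
      simpa [sub_eq_add_neg] using tendsto_atTop_add_const_left _ (sMinus - tm) this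
    have h1 : Tendsto (fun s : ℝ =>
        ((sMinus - tm - s) - Real.sqrt ((sMinus - tm - s) ^ 2 + (C + ‖b‖ ^ 2 - tm ^ 2)))
          + (-sMinus + tm)) atBot (nhds (0 + (-sMinus + tm))) :=
      Tendsto.add_const _ ((sqrt_sq_add_sub_tendsto _ hKm).comp hx)
    rw [zero_add] at h1
    apply h1.congr'
    filter_upwards [eventually_le_atBot sMinus] with s hs'
    rw [keyM s hs']
    ring
  have hsum := (hf.comp tendsto_fst).add (hg.comp tendsto_snd)
  have heq : ((sPlus - tp) + (-sMinus + tm)) =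
      ((sPlus - sMinus) - tp + tm) := by ring
  rw [heq] at hsum
  apply hsum.congr
  intro p
  simp only [Function.comp]
  ring
end

section
/- Let n ≥ 1, C ≥ 0, and for i = 1, 2 let γᵢ : ℝ → ℝⁿ be curves and s_{i,−} ≤ s_{i,+} real numbers. Assume the parametrized tails agree: γ₁(s_{1,+} + u) = γ₂(s_{2,+} + u) for all u ≥ 0, and γ₁(s_{1,−} + u) = γ₂(s_{2,−} + u) for all u ≤ 0. Assume moreover that for i = 1, 2 there exists a real number 𝔗ᵢ such that (s, s') ↦ s − s' − √(C + ‖γᵢ(s)‖²) − √(C + ‖γᵢ(s')‖²) tends to 𝔗ᵢ along the product filter atTop ×ˢ atBot, and that 𝔗₁ = 𝔗₂. Then s_{1,+} − s_{1,−} = s_{2,+} − s_{2,−}. -/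
open Filter Topology

/-!
Outside the perturbation region the first curve is the second one with its parameter shifted,
by `a = s₂₊ - s₁₊` near `+∞` and by `b = s₂₋ - s₁₋` near `-∞`. Since the sojourn functional
`s - s' - φ(γ s) - φ(γ s')` only sees the two ends, the limit for `γ₁` is the limit for `γ₂`
corrected by `-a + b`; equality of the two limits forces `a = b`.
-/

section Sojourn

variable {X : Type*}

/-- With `φ x = √(1 + t² + ‖x‖²)`, its limit along `atTop ×ˢ atBot` is the paper's `𝔗`. -/
def sojournExcess (φ : X → ℝ) (γ : ℝ → X) (p : ℝ × ℝ) : ℝ :=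
  p.1 - p.2 - φ (γ p.1) - φ (γ p.2)

theorem tendsto_prodMap_add_const_atTop_atBot (a b : ℝ) :
    Tendsto (Prod.map (· + a) (· + b)) (atTop ×ˢ atBot) (atTop ×ˢ atBot) :=
  (tendsto_atTop_add_const_right _ a tendsto_id).prodMap
    (tendsto_atBot_add_const_right _ b tendsto_id)

theorem tendsto_sojournExcess_of_eventually_shift {φ : X → ℝ} {γ₁ γ₂ : ℝ → X} {a b L : ℝ}
    (hplus : ∀ᶠ t in atTop, γ₁ t = γ₂ (t + a)) (hminus : ∀ᶠ t in atBot, γ₁ t = γ₂ (t + b))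
    (h : Tendsto (sojournExcess φ γ₂) (atTop ×ˢ atBot) (𝓝 L)) :
    Tendsto (sojournExcess φ γ₁) (atTop ×ˢ atBot) (𝓝 (L - a + b)) := by
  have hshifted : Tendsto (fun p => sojournExcess φ γ₂ (p.1 + a, p.2 + b) - a + b)
      (atTop ×ˢ atBot) (𝓝 (L - a + b)) :=
    ((h.comp (tendsto_prodMap_add_const_atTop_atBot a b)).sub_const a).add_const b
  refine hshifted.congr' ?_
  filter_upwards [prod_mem_prod hplus hminus] with p ⟨hp₁, hp₂⟩
  simp only [sojournExcess]
  rw [hp₁, hp₂]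
  ring

end Sojourn

section Tails

variable {X : Type*} {γ₁ γ₂ : ℝ → X} {s₁ s₂ : ℝ}

theorem eventually_atTop_eq_comp_add_of_tail_eq
    (h : ∀ u : ℝ, 0 ≤ u → γ₁ (s₁ + u) = γ₂ (s₂ + u)) :
    ∀ᶠ t in atTop, γ₁ t = γ₂ (t + (s₂ - s₁)) := by
  filter_upwards [eventually_ge_atTop s₁] with t ht
  convert h (t - s₁) (sub_nonneg.2 ht) using 2 <;> ring

theorem eventually_atBot_eq_comp_add_of_tail_eq
    (h : ∀ u : ℝ, u ≤ 0 → γ₁ (s₁ + u) = γ₂ (s₂ + u)) :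
    ∀ᶠ t in atBot, γ₁ t = γ₂ (t + (s₂ - s₁)) := by
  filter_upwards [eventually_le_atBot s₁] with t ht
  convert h (t - s₁) (sub_nonpos.2 ht) using 2 <;> ring

end Tails

theorem eq_duration_of_tails_eq_of_sojourn_eq_general {n : ℕ}
    (C : ℝ)
    (γ₁ γ₂ : ℝ → EuclideanSpace ℝ (Fin n))
    (s₁Minus s₁Plus s₂Minus s₂Plus : ℝ)
    (htailPlus : ∀ u : ℝ, 0 ≤ u → γ₁ (s₁Plus + u) = γ₂ (s₂Plus + u))
    (htailMinus : ∀ u : ℝ, u ≤ 0 → γ₁ (s₁Minus + u) = γ₂ (s₂Minus + u))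
    (𝔗₁ 𝔗₂ : ℝ)
    (hlim₁ : Tendsto
      (fun p : ℝ × ℝ =>
        p.1 - p.2 - Real.sqrt (C + ‖γ₁ p.1‖ ^ 2) - Real.sqrt (C + ‖γ₁ p.2‖ ^ 2))
      (atTop ×ˢ atBot) (nhds 𝔗₁))
    (hlim₂ : Tendsto
      (fun p : ℝ × ℝ =>
        p.1 - p.2 - Real.sqrt (C + ‖γ₂ p.1‖ ^ 2) - Real.sqrt (C + ‖γ₂ p.2‖ ^ 2))
      (atTop ×ˢ atBot) (nhds 𝔗₂))
    (h𝔗 : 𝔗₁ = 𝔗₂) :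
    s₁Plus - s₁Minus = s₂Plus - s₂Minus := by
  set φ : EuclideanSpace ℝ (Fin n) → ℝ := fun x => Real.sqrt (C + ‖x‖ ^ 2)
  have hlim₁' : Tendsto (sojournExcess φ γ₁) (atTop ×ˢ atBot)
      (𝓝 (𝔗₂ - (s₂Plus - s₁Plus) + (s₂Minus - s₁Minus))) :=
    tendsto_sojournExcess_of_eventually_shift
      (eventually_atTop_eq_comp_add_of_tail_eq htailPlus)
      (eventually_atBot_eq_comp_add_of_tail_eq htailMinus) hlim₂
  have := tendsto_nhds_unique hlim₁ hlim₁'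
  linarith

/-- Two curves whose parametrized incoming and outgoing tails agree (up to the parameter
shifts determined by their respective entry times `sᵢMinus` and exit times `sᵢPlus`), and
which have equal total sojourn times relative to `C`, spend the same parameter duration
between entry and exit: `s₁Plus − s₁Minus = s₂Plus − s₂Minus`. -/
theorem eq_duration_of_tails_eq_of_sojourn_eq {n : ℕ} (hn : 1 ≤ n)
    (C : ℝ) (hC : 0 ≤ C)
    (γ₁ γ₂ : ℝ → EuclideanSpace ℝ (Fin n))
    (s₁Minus s₁Plus s₂Minus s₂Plus : ℝ)
    (h₁ : s₁Minus ≤ s₁Plus) (h₂ : s₂Minus ≤ s₂Plus)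
    (htailPlus : ∀ u : ℝ, 0 ≤ u → γ₁ (s₁Plus + u) = γ₂ (s₂Plus + u))
    (htailMinus : ∀ u : ℝ, u ≤ 0 → γ₁ (s₁Minus + u) = γ₂ (s₂Minus + u))
    (𝔗₁ 𝔗₂ : ℝ)
    (hlim₁ : Tendsto
      (fun p : ℝ × ℝ =>
        p.1 - p.2 - Real.sqrt (C + ‖γ₁ p.1‖ ^ 2) - Real.sqrt (C + ‖γ₁ p.2‖ ^ 2))
      (atTop ×ˢ atBot) (nhds 𝔗₁))
    (hlim₂ : Tendsto
      (fun p : ℝ × ℝ =>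
        p.1 - p.2 - Real.sqrt (C + ‖γ₂ p.1‖ ^ 2) - Real.sqrt (C + ‖γ₂ p.2‖ ^ 2))
      (atTop ×ˢ atBot) (nhds 𝔗₂))
    (h𝔗 : 𝔗₁ = 𝔗₂) :
    s₁Plus - s₁Minus = s₂Plus - s₂Minus :=
  eq_duration_of_tails_eq_of_sojourn_eq_general C γ₁ γ₂ s₁Minus s₁Plus s₂Minus s₂Plus htailPlus
    htailMinus 𝔗₁ 𝔗₂ hlim₁ hlim₂ h𝔗
end

section
/- Let n ≥ 1, C ≥ 0, let v₋, v₊ ∈ ℝⁿ be unit vectors, and for i = 1, 2 let γᵢ : ℝ → ℝⁿ be curves and s_{i,−} ≤ s_{i,+} real numbers such that γᵢ(s) = γᵢ(s_{i,+}) + (s − s_{i,+})·v₊ for all s ≥ s_{i,+} and γᵢ(s) = γᵢ(s_{i,−}) + (s − s_{i,−})·v₋ for all s ≤ s_{i,−}, and such that the entry and exit data coincide: γ₁(s_{1,+}) = γ₂(s_{2,+}) and γ₁(s_{1,−}) = γ₂(s_{2,−}). If the total sojourn times of γ₁ and γ₂ relative to C are equal — that is, the limits along atTop ×ˢ atBot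 of (s, s') ↦ s − s' − √(C + ‖γᵢ(s)‖²) − √(C + ‖γᵢ(s')‖²), which exist by the eventual straightness, agree for i = 1 and i = 2 — then s_{1,+} − s_{1,−} = s_{2,+} − s_{2,−}. -/
/-!
Along an outgoing ray `P + (s - a) • v` with `‖v‖ = 1`, completing the square gives
`C + ‖P + (s - a) • v‖² = (s - a + ⟪P, v⟫)² + K` with `K` independent of `s`, so
`s - √(C + ‖γ s‖²) → a - ⟪P, v⟫`, and symmetrically for the incoming ray. The total sojourn
time of a curve that is straight outside `[s₋, s₊]` is therefore
`s₊ - s₋ - ⟪γ s₊, v₊⟫ + ⟪γ s₋, v₋⟫`; when the entry and exit data agree, equal sojourn times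
leave only `s₊ - s₋` to compare.
-/

open Filter Topology
open scoped RealInnerProductSpace

namespace Real

theorem abs_sqrt_sq_add_sub_le {t : ℝ} (ht : 0 < t) (K : ℝ) : |√(t ^ 2 + K) - t| ≤ |K| / t := by
  rw [le_div_iff₀ ht]
  by_cases hK : 0 ≤ t ^ 2 + K
  · have hprod : (√(t ^ 2 + K) - t) * (√(t ^ 2 + K) + t) = K := by
      ring_nf
      rw [sq_sqrt hK]
      ring
    calc |√(t ^ 2 + K) - t| * t ≤ |√(t ^ 2 + K) - t| * (√(t ^ 2 + K) + t) := by
          gcongr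
          exact le_add_of_nonneg_left (sqrt_nonneg _)
      _ = |(√(t ^ 2 + K) - t) * (√(t ^ 2 + K) + t)| := by
          rw [abs_mul, abs_of_nonneg (by positivity : 0 ≤ √(t ^ 2 + K) + t)]
      _ = |K| := by rw [hprod]
  · -- `√` of a negative number is `0`, and then `t² < -K ≤ |K|`.
    rw [sqrt_eq_zero'.mpr (not_le.mp hK).le, zero_sub, abs_neg, abs_of_pos ht]
    nlinarith [neg_abs_le K]

theorem tendsto_sqrt_sq_add_sub_atTop (K : ℝ) :
    Tendsto (fun t : ℝ => √(t ^ 2 + K) - t) atTop (𝓝 0) :=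
  squeeze_zero_norm' ((eventually_gt_atTop 0).mono fun _ ht => abs_sqrt_sq_add_sub_le ht K)
    (tendsto_const_nhds.div_atTop tendsto_id)

end Real

section Ray

variable {E : Type*} [NormedAddCommGroup E] [InnerProductSpace ℝ E]

theorem tendsto_sub_sqrt_norm_add_smul_atTop (C : ℝ) (P : E) {v : E} (hv : ‖v‖ = 1) (a : ℝ) :
    Tendsto (fun s : ℝ => s - √(C + ‖P + (s - a) • v‖ ^ 2)) atTop (𝓝 (a - ⟪P, v⟫)) := by
  have hsquare : ∀ s : ℝ,
      C + ‖P + (s - a) • v‖ ^ 2 = (s + (⟪P, v⟫ - a)) ^ 2 + (C + ‖P‖ ^ 2 - ⟪P, v⟫ ^ 2) := by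
    intro s
    rw [norm_add_sq_real, real_inner_smul_right, norm_smul, Real.norm_eq_abs, mul_pow, sq_abs, hv]
    ring
  have h := tendsto_const_nhds (x := a - ⟪P, v⟫) |>.sub <|
    (Real.tendsto_sqrt_sq_add_sub_atTop (C + ‖P‖ ^ 2 - ⟪P, v⟫ ^ 2)).comp
      (tendsto_atTop_add_const_right atTop (⟪P, v⟫ - a) tendsto_id)
  rw [sub_zero] at h
  refine h.congr fun s => ?_
  simp only [Function.comp_apply, id, hsquare]
  ring

theorem tendsto_neg_sub_sqrt_norm_add_smul_atBot (C : ℝ) (Q : E) {v : E} (hv : ‖v‖ = 1) (b : ℝ) :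
    Tendsto (fun s : ℝ => -s - √(C + ‖Q + (s - b) • v‖ ^ 2)) atBot (𝓝 (⟪Q, v⟫ - b)) := by
  have h := (tendsto_sub_sqrt_norm_add_smul_atTop C Q (v := -v) (by rwa [norm_neg]) (-b)).comp
    tendsto_neg_atBot_atTop
  rw [inner_neg_right, sub_neg_eq_add, neg_add_eq_sub] at h
  refine h.congr fun s => ?_
  simp only [Function.comp_apply, smul_neg, ← neg_smul, neg_sub_neg, neg_sub]

theorem tendsto_sojourn_of_straight_outside (C : ℝ) {vMinus vPlus : E} (hvm : ‖vMinus‖ = 1)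
    (hvp : ‖vPlus‖ = 1) {γ : ℝ → E} {sMinus sPlus : ℝ}
    (hout : ∀ s, sPlus ≤ s → γ s = γ sPlus + (s - sPlus) • vPlus)
    (hin : ∀ s, s ≤ sMinus → γ s = γ sMinus + (s - sMinus) • vMinus) :
    Tendsto (fun p : ℝ × ℝ => p.1 - p.2 - √(C + ‖γ p.1‖ ^ 2) - √(C + ‖γ p.2‖ ^ 2))
      (atTop ×ˢ atBot)
      (𝓝 (sPlus - sMinus - ⟪γ sPlus, vPlus⟫ + ⟪γ sMinus, vMinus⟫)) := by
  have hTop : Tendsto (fun s => s - √(C + ‖γ s‖ ^ 2)) atTop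
      (𝓝 (sPlus - ⟪γ sPlus, vPlus⟫)) :=
    (tendsto_sub_sqrt_norm_add_smul_atTop C _ hvp sPlus).congr' <|
      (eventually_ge_atTop sPlus).mono fun s hs => by dsimp only; rw [hout s hs]
  have hBot : Tendsto (fun s => -s - √(C + ‖γ s‖ ^ 2)) atBot
      (𝓝 (⟪γ sMinus, vMinus⟫ - sMinus)) :=
    (tendsto_neg_sub_sqrt_norm_add_smul_atBot C _ hvm sMinus).congr' <|
      (eventually_le_atBot sMinus).mono fun s hs => by dsimp only; rw [hin s hs]
  convert (hTop.comp tendsto_fst).add (hBot.comp tendsto_snd) using 1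
  · ext p
    simp only [Function.comp_apply]
    ring
  · congr 1; ring

end Ray

theorem eq_duration_of_sojourn_eq_general {n : ℕ}
    (C : ℝ)
    (vMinus vPlus : EuclideanSpace ℝ (Fin n)) (hvm : ‖vMinus‖ = 1) (hvp : ‖vPlus‖ = 1)
    (γ₁ γ₂ : ℝ → EuclideanSpace ℝ (Fin n))
    (s₁Minus s₁Plus s₂Minus s₂Plus : ℝ)
    (hout₁ : ∀ s, s₁Plus ≤ s → γ₁ s = γ₁ s₁Plus + (s - s₁Plus) • vPlus)
    (hin₁ : ∀ s, s ≤ s₁Minus → γ₁ s = γ₁ s₁Minus + (s - s₁Minus) • vMinus)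
    (hout₂ : ∀ s, s₂Plus ≤ s → γ₂ s = γ₂ s₂Plus + (s - s₂Plus) • vPlus)
    (hin₂ : ∀ s, s ≤ s₂Minus → γ₂ s = γ₂ s₂Minus + (s - s₂Minus) • vMinus)
    (hexit : γ₁ s₁Plus = γ₂ s₂Plus) (hentry : γ₁ s₁Minus = γ₂ s₂Minus)
    (hsojourn : ∃ 𝔗 : ℝ,
      Tendsto
        (fun p : ℝ × ℝ =>
          p.1 - p.2 - Real.sqrt (C + ‖γ₁ p.1‖ ^ 2) - Real.sqrt (C + ‖γ₁ p.2‖ ^ 2))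
        (atTop ×ˢ atBot) (nhds 𝔗) ∧
      Tendsto
        (fun p : ℝ × ℝ =>
          p.1 - p.2 - Real.sqrt (C + ‖γ₂ p.1‖ ^ 2) - Real.sqrt (C + ‖γ₂ p.2‖ ^ 2))
        (atTop ×ˢ atBot) (nhds 𝔗)) :
    s₁Plus - s₁Minus = s₂Plus - s₂Minus := by
  obtain ⟨T, hT₁, hT₂⟩ := hsojourn
  have hT₁' := tendsto_nhds_unique hT₁ (tendsto_sojourn_of_straight_outside C hvm hvp hout₁ hin₁)
  have hT₂' := tendsto_nhds_unique hT₂ (tendsto_sojourn_of_straight_outside C hvm hvp hout₂ hin₂)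
  rw [hexit, hentry] at hT₁'
  linarith

/-- Core analytic step for "equal sojourn times determine equal truncated lengths":
if two curves `γ₁, γ₂` in `ℝⁿ` are straight unit-speed lines with the common direction
`vPlus` after their respective exit parameters `sᵢPlus` and with the common direction
`vMinus` before their respective entry parameters `sᵢMinus`, have coinciding entry points
`γ₁(s₁Minus) = γ₂(s₂Minus)` and coinciding exit points `γ₁(s₁Plus) = γ₂(s₂Plus)`, and have
equal total sojourn times relative to `C` (the limits along `atTop ×ˢ atBot` of
`(s, s') ↦ s − s' − √(C + ‖γᵢ(s)‖²) − √(C + ‖γᵢ(s')‖²)`, which exist by the eventual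
straightness, agree), then `s₁Plus − s₁Minus = s₂Plus − s₂Minus`. -/
theorem eq_duration_of_sojourn_eq {n : ℕ} (hn : 1 ≤ n)
    (C : ℝ) (hC : 0 ≤ C)
    (vMinus vPlus : EuclideanSpace ℝ (Fin n)) (hvm : ‖vMinus‖ = 1) (hvp : ‖vPlus‖ = 1)
    (γ₁ γ₂ : ℝ → EuclideanSpace ℝ (Fin n))
    (s₁Minus s₁Plus s₂Minus s₂Plus : ℝ)
    (h₁ : s₁Minus ≤ s₁Plus) (h₂ : s₂Minus ≤ s₂Plus)
    (hout₁ : ∀ s, s₁Plus ≤ s → γ₁ s = γ₁ s₁Plus + (s - s₁Plus) • vPlus)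
    (hin₁ : ∀ s, s ≤ s₁Minus → γ₁ s = γ₁ s₁Minus + (s - s₁Minus) • vMinus)
    (hout₂ : ∀ s, s₂Plus ≤ s → γ₂ s = γ₂ s₂Plus + (s - s₂Plus) • vPlus)
    (hin₂ : ∀ s, s ≤ s₂Minus → γ₂ s = γ₂ s₂Minus + (s - s₂Minus) • vMinus)
    (hexit : γ₁ s₁Plus = γ₂ s₂Plus) (hentry : γ₁ s₁Minus = γ₂ s₂Minus)
    (hsojourn : ∃ 𝔗 : ℝ,
      Tendsto
        (fun p : ℝ × ℝ =>
          p.1 - p.2 - Real.sqrt (C + ‖γ₁ p.1‖ ^ 2) - Real.sqrt (C + ‖γ₁ p.2‖ ^ 2))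
        (atTop ×ˢ atBot) (nhds 𝔗) ∧
      Tendsto
        (fun p : ℝ × ℝ =>
          p.1 - p.2 - Real.sqrt (C + ‖γ₂ p.1‖ ^ 2) - Real.sqrt (C + ‖γ₂ p.2‖ ^ 2))
        (atTop ×ˢ atBot) (nhds 𝔗)) :
    s₁Plus - s₁Minus = s₂Plus - s₂Minus :=
  eq_duration_of_sojourn_eq_general C vMinus vPlus hvm hvp γ₁ γ₂ s₁Minus s₁Plus s₂Minus s₂Plus hout₁
    hin₁ hout₂ hin₂ hexit hentry hsojourn
end
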